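/- arXiv:2510.23762 — 4 statements merged into one kernel-verified Lean document; each statement's English description precedes it below -/
import Mathlib

section
/- Let W be a nonnegative random variable supported on {0} ∪ [d_L, d_U] with 0 < d_L ≤ d_U < ∞, P(W > 0) > 0, and Var(W) > 0. Then ∫_{d_L}^{d_U} q₁(w) dw + q₀ = 1, where q₁(w) = (E[W | W ≥ w] − E[W])·P(W ≥ w)/Var(W) and q₀ = (E[W | W > 0] − E[W])·P(W > 0)·d_L/Var(W). -/
/-!
Since `(E[W | A] - E W) · P(A) = E[(W - E W); A]` (also when `P(A) = 0`, thanks to the junk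
value of division), both terms are truncated moments of `W - E W`. By Fubini,
`∫_{dL}^{dU} E[(W - E W); W ≥ w] dw = E[(W - E W) · (min W dU - dL)⁺]`, and on the support of
`W` the clipped length `(min W dU - dL)⁺` is `W - dL · 1{W > 0}`. Hence the integral equals
`(Var W - dL · E[(W - E W); W > 0]) / Var W`, and the `q₀` term is the missing
`dL · E[(W - E W); W > 0] / Var W`.
-/

open MeasureTheory Set

theorem setIntegral_div_measure_sub_mul {α : Type*} [MeasurableSpace α] {μ : Measure α}
    [IsFiniteMeasure μ] {f : α → ℝ} (hf : Integrable f μ) (s : Set α) (c : ℝ) :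
    ((∫ x in s, f x ∂μ) / (μ s).toReal - c) * (μ s).toReal = ∫ x in s, (f x - c) ∂μ := by
  rw [integral_sub hf.restrict (integrable_const c), setIntegral_const, smul_eq_mul,
    measureReal_def]
  rcases eq_or_ne (μ s) 0 with hs | hs
  · simp [Measure.restrict_eq_zero.mpr hs, hs]
  · rw [sub_mul, div_mul_cancel₀ _ (ENNReal.toReal_ne_zero.mpr ⟨hs, measure_ne_top μ s⟩)]
    ring

theorem intervalIntegral_indicator_Iic_const {a b : ℝ} (hab : a ≤ b) (x c : ℝ) :
    ∫ w in a..b, (Iic x).indicator (fun _ => c) w = max (min b x - a) 0 * c := by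
  rw [intervalIntegral.integral_of_le hab, setIntegral_indicator measurableSet_Iic,
    Ioc_inter_Iic, setIntegral_const, smul_eq_mul, measureReal_def, Real.volume_Ioc,
    ENNReal.toReal_ofReal']

theorem intervalIntegral_setIntegral_le_eq_integral_mul {α : Type*} [MeasurableSpace α]
    {μ : Measure α} [SFinite μ] {W g : α → ℝ} (hW : Measurable W) (hg : Integrable g μ)
    {a b : ℝ} (hab : a ≤ b) :
    ∫ w in a..b, ∫ ω in {ω | w ≤ W ω}, g ω ∂μ = ∫ ω, max (min b (W ω) - a) 0 * g ω ∂μ := by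
  have hset : MeasurableSet {q : ℝ × α | q.1 ≤ W q.2} :=
    measurableSet_le measurable_fst (hW.comp measurable_snd)
  have hint : Integrable ({q : ℝ × α | q.1 ≤ W q.2}.indicator fun q => g q.2)
      ((volume.restrict (uIoc a b)).prod μ) := by
    rw [uIoc_of_le hab]
    exact (hg.comp_snd _).indicator hset
  calc ∫ w in a..b, ∫ ω in {ω | w ≤ W ω}, g ω ∂μ
      = ∫ w in a..b, ∫ ω, {q : ℝ × α | q.1 ≤ W q.2}.indicator (fun q => g q.2) (w, ω) ∂μ := by
        congr with w
        rw [← integral_indicator (measurableSet_le measurable_const hW)]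
        rfl
    _ = ∫ ω, (∫ w in a..b, (Iic (W ω)).indicator (fun _ => g ω) w) ∂μ :=
        intervalIntegral_integral_swap (f := fun w ω => _) hint
    _ = ∫ ω, max (min b (W ω) - a) 0 * g ω ∂μ := by
        simp_rw [intervalIntegral_indicator_Iic_const hab]

theorem stmt5_general
    {α : Type*} [MeasurableSpace α] (μ : Measure α) [IsProbabilityMeasure μ]
    (W : α → ℝ) (hWmeas : Measurable W)
    (dL dU : ℝ) (hdL : 0 < dL) (hdLU : dL ≤ dU)
    (hval : ∀ᵐ ω ∂μ, W ω = 0 ∨ W ω ∈ Set.Icc dL dU)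
    (hW2 : Integrable (fun ω => (W ω) ^ 2) μ) (hWint : Integrable W μ)
    (hVar : 0 < (∫ ω, (W ω) ^ 2 ∂μ) - (∫ ω, W ω ∂μ) ^ 2) :
    (∫ w in dL..dU,
        ((∫ ω in {ω | w ≤ W ω}, W ω ∂μ) / (μ {ω | w ≤ W ω}).toReal
            - ∫ ω, W ω ∂μ) * (μ {ω | w ≤ W ω}).toReal /
          ((∫ ω, (W ω) ^ 2 ∂μ) - (∫ ω, W ω ∂μ) ^ 2))
      + ((∫ ω in {ω | 0 < W ω}, W ω ∂μ) / (μ {ω | 0 < W ω}).toReal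
            - ∫ ω, W ω ∂μ) * (μ {ω | 0 < W ω}).toReal * dL /
          ((∫ ω, (W ω) ^ 2 ∂μ) - (∫ ω, W ω ∂μ) ^ 2) = 1 := by
  set m := ∫ ω, W ω ∂μ
  set V := (∫ ω, (W ω) ^ 2 ∂μ) - m ^ 2
  set I₀ := ∫ ω in {ω | 0 < W ω}, (W ω - m) ∂μ
  have hWm : Integrable (fun ω => W ω - m) μ := hWint.sub (integrable_const m)
  have hmeas_pos : MeasurableSet {ω | 0 < W ω} := measurableSet_lt measurable_const hWmeas
  have hWWm : Integrable (fun ω => W ω * (W ω - m)) μ := by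
    simp_rw [mul_sub, ← sq]
    exact hW2.sub (hWint.mul_const m)
  have hV : ∫ ω, W ω * (W ω - m) ∂μ = V := by
    simp_rw [mul_sub, ← sq]
    rw [integral_sub hW2 (hWint.mul_const m), integral_mul_const]
    ring
  have hclip : (fun ω => max (min dU (W ω) - dL) 0 * (W ω - m)) =ᵐ[μ]
      fun ω => W ω * (W ω - m) - dL * {ω | 0 < W ω}.indicator (fun ω => W ω - m) ω := by
    filter_upwards [hval] with ω hω
    rcases hω with hzero | ⟨hlo, hhi⟩
    · simp [hzero, hdL.le, hdLU.trans' hdL.le]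
    · have hWpos : 0 < W ω := hdL.trans_le hlo
      simp only [min_eq_right hhi, max_eq_left (sub_nonneg.mpr hlo),
        indicator_of_mem (show ω ∈ {ω | 0 < W ω} from hWpos)]
      ring
  have hq₁ : (∫ w in dL..dU, ((∫ ω in {ω | w ≤ W ω}, W ω ∂μ) / (μ {ω | w ≤ W ω}).toReal - m)
      * (μ {ω | w ≤ W ω}).toReal / V) = (V - dL * I₀) / V := by
    simp_rw [setIntegral_div_measure_sub_mul hWint, intervalIntegral.integral_div,
      intervalIntegral_setIntegral_le_eq_integral_mul hWmeas hWm hdLU, integral_congr_ae hclip]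
    rw [integral_sub hWWm ((hWm.indicator hmeas_pos).const_mul dL), integral_const_mul,
      integral_indicator hmeas_pos, hV]
  rw [hq₁, setIntegral_div_measure_sub_mul hWint, ← add_div, div_eq_one_iff_eq hVar.ne']
  ring

/-- for W ≥ 0 supported on {0} ∪ [d_L,d_U] with Var(W) > 0,
∫_{d_L}^{d_U} q₁(w) dw + q₀ = 1, where
q₁(w) = (E[W|W ≥ w] − E[W])·P(W ≥ w)/Var(W) and
q₀ = (E[W|W > 0] − E[W])·P(W > 0)·d_L/Var(W). -/
theorem stmt5
    {α : Type*} [MeasurableSpace α] (μ : Measure α) [IsProbabilityMeasure μ]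
    (W : α → ℝ) (hWmeas : Measurable W)
    (dL dU : ℝ) (hdL : 0 < dL) (hdLU : dL ≤ dU)
    (hval : ∀ᵐ ω ∂μ, W ω = 0 ∨ W ω ∈ Set.Icc dL dU)
    (hpos : 0 < (μ {ω | 0 < W ω}).toReal)
    (hW2 : Integrable (fun ω => (W ω) ^ 2) μ) (hWint : Integrable W μ)
    (hVar : 0 < (∫ ω, (W ω) ^ 2 ∂μ) - (∫ ω, W ω ∂μ) ^ 2) :
    (∫ w in dL..dU,
        ((∫ ω in {ω | w ≤ W ω}, W ω ∂μ) / (μ {ω | w ≤ W ω}).toReal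
            - ∫ ω, W ω ∂μ) * (μ {ω | w ≤ W ω}).toReal /
          ((∫ ω, (W ω) ^ 2 ∂μ) - (∫ ω, W ω ∂μ) ^ 2))
      + ((∫ ω in {ω | 0 < W ω}, W ω ∂μ) / (μ {ω | 0 < W ω}).toReal
            - ∫ ω, W ω ∂μ) * (μ {ω | 0 < W ω}).toReal * dL /
          ((∫ ω, (W ω) ^ 2 ∂μ) - (∫ ω, W ω ∂μ) ^ 2) = 1 :=
  stmt5_general μ W hWmeas dL dU hdL hdLU hval hW2 hWint hVar
end

section
/- Let W be supported on {0} ∪ [d_L, d_U] with finite variance, and let m : [0, d_U] → ℝ be continuously differentiable on [d_L, d_U] (m(w) = E[Y | W = w]). Then Cov(Y, W)/Var(W) = ∫_{d_L}^{d_U} q₁(w) m'(w) dw + q₀ · (m(d_L) − m(0))/d_L, where q₁(w) = (E[W|W ≥ w] − E[W])P(W ≥ w)/Var(W) and q₀ = (E[W|W>0] − E[W])P(W>0)d_L/Var(W). -/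
open MeasureTheory Set

/-!
On the support `{0} ∪ [d_L, d_U]` of `W`, the fundamental theorem of calculus gives
`m w = m 0 + 𝟙{w > 0} (m d_L - m 0) + ∫_{d_L}^{d_U} 𝟙{t ≤ w} m' t dt`.
Since `Cov(Y, W) = E[m(W) (W - E W)]` and `E[W - E W] = 0`, multiplying by `W - E W`, taking
expectations and exchanging the order of integration in the last term (Fubini) yields
`Cov(Y, W) = (m d_L - m 0) E[(W - E W) 𝟙{W > 0}] + ∫_{d_L}^{d_U} m' t E[(W - E W) 𝟙{W ≥ t}] dt`,
and `E[(W - E W) 𝟙{W ≥ t}] = (E[W | W ≥ t] - E W) P(W ≥ t)`.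
-/

section CondMean

variable {α : Type*} [MeasurableSpace α] {μ : Measure α} {W Y : α → ℝ} {m : ℝ → ℝ}

lemma integral_mul_comp_eq_of_abs_le
    (hm : ∀ φ : ℝ → ℝ, Measurable φ → (∀ x, |φ x| ≤ 1) →
      ∫ ω, Y ω * φ (W ω) ∂μ = ∫ ω, m (W ω) * φ (W ω) ∂μ)
    {φ : ℝ → ℝ} (hφ : Measurable φ) {K : ℝ} (hK : 0 < K) (hφK : ∀ x, |φ x| ≤ K) :
    ∫ ω, Y ω * φ (W ω) ∂μ = ∫ ω, m (W ω) * φ (W ω) ∂μ := by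
  have h := hm (fun x => φ x / K) (hφ.div_const K) fun x => by
    rw [abs_div, abs_of_pos hK, div_le_one hK]
    exact hφK x
  simp only [← mul_div_assoc, integral_div] at h
  exact (div_left_inj' hK.ne').mp h

lemma integral_mul_sub_integral_mul_eq_of_condMean
    (hm : ∀ φ : ℝ → ℝ, Measurable φ → (∀ x, |φ x| ≤ 1) →
      ∫ ω, Y ω * φ (W ω) ∂μ = ∫ ω, m (W ω) * φ (W ω) ∂μ)
    (hW : Measurable W) (hY : Integrable Y μ) {b : ℝ} (hWb : ∀ᵐ ω ∂μ, |W ω| ≤ b) (c : ℝ) :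
    (∫ ω, Y ω * W ω ∂μ) - (∫ ω, Y ω ∂μ) * c = ∫ ω, m (W ω) * (W ω - c) ∂μ := by
  -- a bounded measurable `ψ` with `ψ ∘ W = W - c` a.s., to which the defining property of `m` applies
  set ψ : ℝ → ℝ := fun x => max (-|b|) (min x |b|) - c
  have hψW : ∀ᵐ ω ∂μ, ψ (W ω) = W ω - c := by
    filter_upwards [hWb] with ω hω
    rw [abs_le] at hω
    simp only [ψ, min_eq_left (hω.2.trans (le_abs_self b)),
      max_eq_right (neg_le_neg (le_abs_self b) |>.trans hω.1)]
  have hψ : ∀ x, |ψ x| ≤ |b| + |c| + 1 := fun x => by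
    have : |max (-|b|) (min x |b|)| ≤ |b| :=
      abs_le.mpr ⟨le_max_left _ _, max_le (by linarith [abs_nonneg b]) (min_le_right _ _)⟩
    linarith [abs_sub (max (-|b|) (min x |b|)) c]
  have hψmeas : Measurable ψ :=
    (measurable_const.max (measurable_id.min measurable_const)).sub measurable_const
  have hYW : Integrable (fun ω => Y ω * W ω) μ :=
    hY.mul_bdd hW.aestronglyMeasurable (by simpa only [Real.norm_eq_abs] using hWb)
  calc (∫ ω, Y ω * W ω ∂μ) - (∫ ω, Y ω ∂μ) * c
      = ∫ ω, Y ω * (W ω - c) ∂μ := by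
        rw [← integral_mul_const, ← integral_sub hYW (hY.mul_const c)]
        simp only [mul_sub]
    _ = ∫ ω, Y ω * ψ (W ω) ∂μ := integral_congr_ae (by filter_upwards [hψW] with ω h; rw [h])
    _ = ∫ ω, m (W ω) * ψ (W ω) ∂μ :=
        integral_mul_comp_eq_of_abs_le hm hψmeas (by positivity) hψ
    _ = ∫ ω, m (W ω) * (W ω - c) ∂μ :=
        integral_congr_ae (by filter_upwards [hψW] with ω h; rw [h])

end CondMean

section Fubini

variable {α : Type*} {ν : Measure ℝ} {W : α → ℝ} {g : ℝ → ℝ} {h : α → ℝ}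

lemma integral_indicator_le_mul_eq (ω : α) :
    ∫ t, {p : α × ℝ | p.2 ≤ W p.1}.indicator (fun p => h p.1 * g p.2) (ω, t) ∂ν
      = (∫ t, (Iic (W ω)).indicator g t ∂ν) * h ω := by
  rw [← integral_mul_const]
  congr 1 with t
  by_cases ht : t ≤ W ω <;> simp [ht, mul_comm]

variable [MeasurableSpace α] {μ : Measure α}

lemma integrable_indicator_le_mul_prod (hW : Measurable W) (hg : Integrable g ν)
    (hh : Integrable h μ) :
    Integrable ({p : α × ℝ | p.2 ≤ W p.1}.indicator fun p => h p.1 * g p.2) (μ.prod ν) :=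
  (hh.mul_prod hg).indicator (measurableSet_le measurable_snd (hW.comp measurable_fst))

lemma integrable_integral_indicator_Iic_mul [SFinite ν] (hW : Measurable W)
    (hg : Integrable g ν) (hh : Integrable h μ) :
    Integrable (fun ω => (∫ t, (Iic (W ω)).indicator g t ∂ν) * h ω) μ := by
  simpa only [integral_indicator_le_mul_eq] using
    (integrable_indicator_le_mul_prod hW hg hh).integral_prod_left

lemma integral_integral_indicator_Iic_mul [SFinite μ] [SFinite ν] (hW : Measurable W)
    (hg : Integrable g ν) (hh : Integrable h μ) :
    ∫ ω, (∫ t, (Iic (W ω)).indicator g t ∂ν) * h ω ∂μ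
      = ∫ t, g t * ∫ ω in {ω | t ≤ W ω}, h ω ∂μ ∂ν := by
  simp only [← integral_indicator_le_mul_eq]
  rw [integral_integral_swap
    (f := fun ω t => {p : α × ℝ | p.2 ≤ W p.1}.indicator (fun p => h p.1 * g p.2) (ω, t))
    (integrable_indicator_le_mul_prod hW hg hh)]
  congr 1 with t
  rw [← integral_const_mul, ← integral_indicator (measurableSet_le measurable_const hW)]
  congr 1 with ω
  by_cases ht : t ≤ W ω <;> simp [ht, mul_comm]

end Fubini

lemma setIntegral_sub_const_eq_div_sub_mul {α : Type*} [MeasurableSpace α] {μ : Measure α}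
    [IsFiniteMeasure μ] {f : α → ℝ} {s : Set α} (hf : IntegrableOn f s μ) (c : ℝ) :
    ∫ x in s, (f x - c) ∂μ = ((∫ x in s, f x ∂μ) / (μ s).toReal - c) * (μ s).toReal := by
  rw [integral_sub hf (integrable_const c), setIntegral_const, smul_eq_mul, measureReal_def]
  rcases eq_or_ne (μ s).toReal 0 with hs | hs
  · rw [Measure.restrict_eq_zero.mpr ((ENNReal.toReal_eq_zero_iff _).mp hs
      |>.resolve_right (measure_ne_top μ s)), integral_zero_measure, hs]
    ring
  · field_simp

lemma integral_Ioc_indicator_Iic_eq_sub {f f' : ℝ → ℝ} {a b x : ℝ}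
    (hderiv : ∀ t ∈ Icc a b, HasDerivAt f (f' t) t) (hf' : ContinuousOn f' (Icc a b))
    (hx : x ∈ Icc a b) :
    ∫ t in Ioc a b, (Iic x).indicator f' t = f x - f a := by
  rw [setIntegral_indicator measurableSet_Iic, Ioc_inter_Iic, min_eq_right hx.2,
    ← intervalIntegral.integral_of_le hx.1]
  have hsub : uIcc a x ⊆ Icc a b := by
    rw [uIcc_of_le hx.1]
    exact Icc_subset_Icc_right hx.2
  exact intervalIntegral.integral_eq_sub_of_hasDerivAt (fun t ht => hderiv t (hsub ht))
    (hf'.mono hsub).intervalIntegrable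

lemma eq_add_ite_add_integral_Ioc_indicator_Iic {m m' : ℝ → ℝ} {dL dU w : ℝ} (hdL : 0 < dL)
    (hderiv : ∀ t ∈ Icc dL dU, HasDerivAt m (m' t) t) (hm' : ContinuousOn m' (Icc dL dU))
    (hw : w = 0 ∨ w ∈ Icc dL dU) :
    m w = m 0 + (if 0 < w then m dL - m 0 else 0) + ∫ t in Ioc dL dU, (Iic w).indicator m' t := by
  rcases hw with rfl | hw
  · have hzero : ∫ t in Ioc dL dU, (Iic (0 : ℝ)).indicator m' t = 0 :=
      setIntegral_eq_zero_of_forall_eq_zero fun t ht =>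
        indicator_of_notMem (show t ∉ Iic 0 from not_le.mpr (hdL.trans ht.1)) m'
    simp [hzero]
  · rw [integral_Ioc_indicator_Iic_eq_sub hderiv hm' hw, if_pos (hdL.trans_le hw.1)]
    ring

lemma integral_comp_mul_sub_integral_eq_of_hasDerivAt {α : Type*} [MeasurableSpace α]
    {μ : Measure α} [IsProbabilityMeasure μ] {W : α → ℝ} (hW : Measurable W)
    (hWint : Integrable W μ) {m m' : ℝ → ℝ} {dL dU : ℝ} (hdL : 0 < dL)
    (hval : ∀ᵐ ω ∂μ, W ω = 0 ∨ W ω ∈ Icc dL dU)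
    (hderiv : ∀ t ∈ Icc dL dU, HasDerivAt m (m' t) t) (hm' : ContinuousOn m' (Icc dL dU)) :
    ∫ ω, m (W ω) * (W ω - ∫ ω, W ω ∂μ) ∂μ
      = (m dL - m 0) * ∫ ω in {ω | 0 < W ω}, (W ω - ∫ ω, W ω ∂μ) ∂μ
        + ∫ t in Ioc dL dU, m' t * ∫ ω in {ω | t ≤ W ω}, (W ω - ∫ ω, W ω ∂μ) ∂μ := by
  set E := ∫ ω, W ω ∂μ
  have hcent : Integrable (fun ω => W ω - E) μ := hWint.sub (integrable_const E)
  have hm'int : Integrable m' (volume.restrict (Ioc dL dU)) :=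
    hm'.integrableOn_Icc.mono_set Ioc_subset_Icc_self
  have hpos : MeasurableSet {ω | 0 < W ω} := measurableSet_lt measurable_const hW
  have hdecomp : ∀ᵐ ω ∂μ, m (W ω) * (W ω - E) = m 0 * (W ω - E)
      + (m dL - m 0) * {ω | 0 < W ω}.indicator (fun ω => W ω - E) ω
      + (∫ t in Ioc dL dU, (Iic (W ω)).indicator m' t) * (W ω - E) := by
    filter_upwards [hval] with ω hω
    rw [eq_add_ite_add_integral_Ioc_indicator_Iic hdL hderiv hm' hω]
    by_cases h : 0 < W ω <;> simp [h] <;> ring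
  rw [integral_congr_ae hdecomp,
    integral_add (by exact (hcent.const_mul _).add ((hcent.indicator hpos).const_mul _))
      (integrable_integral_indicator_Iic_mul hW hm'int hcent),
    integral_add (hcent.const_mul _) ((hcent.indicator hpos).const_mul _),
    integral_const_mul, integral_const_mul, integral_indicator hpos,
    integral_integral_indicator_Iic_mul hW hm'int hcent,
    integral_sub hWint (integrable_const E), integral_const, probReal_univ, one_smul,
    sub_self, mul_zero, zero_add]

theorem stmt9_general
    {α : Type*} [MeasurableSpace α] (μ : Measure α) [IsProbabilityMeasure μ]
    (W Y : α → ℝ) (hWmeas : Measurable W)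
    (dL dU : ℝ) (hdL : 0 < dL) (hdLU : dL ≤ dU)
    (hval : ∀ᵐ ω ∂μ, W ω = 0 ∨ W ω ∈ Set.Icc dL dU)
    (hWint : Integrable W μ)
    (hYint : Integrable Y μ)
    (m m' : ℝ → ℝ)
    -- m is the conditional mean function of Y given W:
    (hm : ∀ φ : ℝ → ℝ, Measurable φ → (∀ x, |φ x| ≤ 1) →
      (∫ ω, Y ω * φ (W ω) ∂μ) = ∫ ω, m (W ω) * φ (W ω) ∂μ)
    (hderiv : ∀ w ∈ Set.Icc dL dU, HasDerivAt m (m' w) w)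
    (hm'cont : ContinuousOn m' (Set.Icc dL dU)) :
    ((∫ ω, Y ω * W ω ∂μ) - (∫ ω, Y ω ∂μ) * (∫ ω, W ω ∂μ)) /
        ((∫ ω, (W ω) ^ 2 ∂μ) - (∫ ω, W ω ∂μ) ^ 2)
      = (∫ w in dL..dU,
          ((∫ ω in {ω | w ≤ W ω}, W ω ∂μ) / (μ {ω | w ≤ W ω}).toReal
              - ∫ ω, W ω ∂μ) * (μ {ω | w ≤ W ω}).toReal /
            ((∫ ω, (W ω) ^ 2 ∂μ) - (∫ ω, W ω ∂μ) ^ 2) * m' w)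
        + ((∫ ω in {ω | 0 < W ω}, W ω ∂μ) / (μ {ω | 0 < W ω}).toReal
              - ∫ ω, W ω ∂μ) * (μ {ω | 0 < W ω}).toReal * dL /
            ((∫ ω, (W ω) ^ 2 ∂μ) - (∫ ω, W ω ∂μ) ^ 2)
          * ((m dL - m 0) / dL) := by
  have hWb : ∀ᵐ ω ∂μ, |W ω| ≤ dU := by
    filter_upwards [hval] with ω hω
    rcases hω with h0 | hI
    · rw [h0, abs_zero]
      linarith
    · rw [abs_of_pos (hdL.trans_le hI.1)]
      exact hI.2
  rw [integral_mul_sub_integral_mul_eq_of_condMean hm hWmeas hYint hWb,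
    integral_comp_mul_sub_integral_eq_of_hasDerivAt hWmeas hWint hdL hval hderiv hm'cont]
  simp only [setIntegral_sub_const_eq_div_sub_mul hWint.integrableOn]
  rw [intervalIntegral.integral_of_le hdLU, add_div, add_comm, ← integral_div]
  congr 1
  · congr 1 with t
    ring
  · field_simp

/-- continuous-treatment decomposition. For W supported on
{0} ∪ [d_L,d_U] with P(W=0) > 0 and Var(W) > 0, and m(w) = E[Y|W=w] C¹ on
[d_L,d_U],
Cov(Y,W)/Var(W) = ∫_{d_L}^{d_U} q₁(w) m'(w) dw + q₀·(m(d_L) − m(0))/d_L. -/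
theorem stmt9
    {α : Type*} [MeasurableSpace α] (μ : Measure α) [IsProbabilityMeasure μ]
    (W Y : α → ℝ) (hWmeas : Measurable W) (hYmeas : Measurable Y)
    (dL dU : ℝ) (hdL : 0 < dL) (hdLU : dL ≤ dU)
    (hval : ∀ᵐ ω ∂μ, W ω = 0 ∨ W ω ∈ Set.Icc dL dU)
    (hp0 : 0 < (μ {ω | W ω = 0}).toReal)
    (hppos : 0 < (μ {ω | 0 < W ω}).toReal)
    (hW2 : Integrable (fun ω => (W ω) ^ 2) μ) (hWint : Integrable W μ)
    (hY2 : Integrable (fun ω => (Y ω) ^ 2) μ) (hYint : Integrable Y μ)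
    (hVar : 0 < (∫ ω, (W ω) ^ 2 ∂μ) - (∫ ω, W ω ∂μ) ^ 2)
    (m m' : ℝ → ℝ)
    -- m is the conditional mean function of Y given W:
    (hm : ∀ φ : ℝ → ℝ, Measurable φ → (∀ x, |φ x| ≤ 1) →
      (∫ ω, Y ω * φ (W ω) ∂μ) = ∫ ω, m (W ω) * φ (W ω) ∂μ)
    (hderiv : ∀ w ∈ Set.Icc dL dU, HasDerivAt m (m' w) w)
    (hm'cont : ContinuousOn m' (Set.Icc dL dU)) :
    ((∫ ω, Y ω * W ω ∂μ) - (∫ ω, Y ω ∂μ) * (∫ ω, W ω ∂μ)) /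
        ((∫ ω, (W ω) ^ 2 ∂μ) - (∫ ω, W ω ∂μ) ^ 2)
      = (∫ w in dL..dU,
          ((∫ ω in {ω | w ≤ W ω}, W ω ∂μ) / (μ {ω | w ≤ W ω}).toReal
              - ∫ ω, W ω ∂μ) * (μ {ω | w ≤ W ω}).toReal /
            ((∫ ω, (W ω) ^ 2 ∂μ) - (∫ ω, W ω ∂μ) ^ 2) * m' w)
        + ((∫ ω in {ω | 0 < W ω}, W ω ∂μ) / (μ {ω | 0 < W ω}).toReal
              - ∫ ω, W ω ∂μ) * (μ {ω | 0 < W ω}).toReal * dL /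
            ((∫ ω, (W ω) ^ 2 ∂μ) - (∫ ω, W ω ∂μ) ^ 2)
          * ((m dL - m 0) / dL) :=
  stmt9_general μ W Y hWmeas dL dU hdL hdLU hval hWint hYint m m' hm hderiv hm'cont
end

section
/- For a mean-zero random variable W with density f and finite variance, the function v(w) = ∫_{-∞}^{w} m f(m) dm satisfies v(w) ≤ 0 for all w, v(w) → 0 as w → ±∞, and −v(w)/Var(W) integrates to 1 over ℝ; hence q(w) = −v(w)/Var(W) is a probability density on ℝ. -/
/-!
Since `∫ m f = 0`, `v w = -∫_{m > w} m f(m) dm`; the first form is `≤ 0` for `w ≤ 0` and the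
second for `w > 0`. For the normalisation, write `-v w = ∫ K(w, m) dm` with
`K(w, m) = g(m) (1[0 < w ≤ m] - 1[m < w ≤ 0])`, `g(m) = m f(m)`. For fixed `m`, `K(·, m)`
integrates to `∫ w in 0..m, g m = m g(m)`, so Fubini gives `∫ -v = ∫ m² f = Var W`.
-/

open MeasureTheory Filter Topology Set Function

noncomputable def tailKernel (g : ℝ → ℝ) (w m : ℝ) : ℝ :=
  (Ioc 0 m).indicator (fun _ => g m) w - (Ioc m 0).indicator (fun _ => g m) w

section

variable {g : ℝ → ℝ}

theorem setIntegral_Iic_eq_neg_setIntegral_Ioi (hg : Integrable g) (h0 : ∫ m, g m = 0) (w : ℝ) :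
    ∫ m in Iic w, g m = -∫ m in Ioi w, g m := by
  linarith [intervalIntegral.integral_Iic_add_Ioi (b := w) hg.integrableOn hg.integrableOn]

theorem setIntegral_Iic_nonpos (hg : Integrable g) (h0 : ∫ m, g m = 0)
    (hg_nonpos : ∀ m ≤ 0, g m ≤ 0) (hg_nonneg : ∀ m ≥ 0, 0 ≤ g m) (w : ℝ) :
    ∫ m in Iic w, g m ≤ 0 := by
  rcases le_or_gt w 0 with hw | hw
  · exact setIntegral_nonpos measurableSet_Iic fun m hm => hg_nonpos m (le_trans hm hw)
  · rw [setIntegral_Iic_eq_neg_setIntegral_Ioi hg h0, neg_nonpos]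
    exact setIntegral_nonneg measurableSet_Ioi fun m hm => hg_nonneg m (le_of_lt (lt_trans hw hm))

theorem tendsto_setIntegral_Iic_atTop (hg : Integrable g) :
    Tendsto (fun w => ∫ m in Iic w, g m) atTop (𝓝 (∫ m, g m)) :=
  (aecover_Iic tendsto_id).integral_tendsto_of_countably_generated hg

theorem integrable_indicator_Ioc_const (a b c : ℝ) :
    Integrable ((Ioc a b).indicator fun _ => c) :=
  (integrableOn_const measure_Ioc_lt_top.ne).integrable_indicator measurableSet_Ioc

theorem integral_tailKernel_fst (m : ℝ) : ∫ w, tailKernel g w m = m * g m := by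
  calc ∫ w, tailKernel g w m = (∫ _ in Ioc 0 m, g m) - ∫ _ in Ioc m 0, g m := by
        rw [← integral_indicator measurableSet_Ioc, ← integral_indicator measurableSet_Ioc,
          ← integral_sub (integrable_indicator_Ioc_const _ _ _)
            (integrable_indicator_Ioc_const _ _ _)]
        rfl
    _ = ∫ _ in 0..m, g m := rfl
    _ = m * g m := by simp

theorem integral_norm_tailKernel_fst (m : ℝ) :
    ∫ w, ‖tailKernel g w m‖ = ‖m * g m‖ := by
  rcases le_total 0 m with hm | hm
  · have : ∀ w, tailKernel g w m = (Ioc 0 m).indicator (fun _ => g m) w := by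
      simp [tailKernel, Ioc_eq_empty_of_le hm]
    simp_rw [this, norm_indicator_eq_indicator_norm, integral_indicator_const _ measurableSet_Ioc]
    simp [norm_mul, abs_of_nonneg hm, hm]
  · have : ∀ w, tailKernel g w m = -(Ioc m 0).indicator (fun _ => g m) w := by
      simp [tailKernel, Ioc_eq_empty_of_le hm]
    simp_rw [this, norm_neg, norm_indicator_eq_indicator_norm,
      integral_indicator_const _ measurableSet_Ioc]
    simp [norm_mul, abs_of_nonpos hm, hm]

theorem tailKernel_of_pos {w : ℝ} (hw : 0 < w) (m : ℝ) :
    tailKernel g w m = (Ici w).indicator g m := by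
  by_cases hm : w ≤ m <;> simp [tailKernel, hw, hm, hw.not_ge]

theorem tailKernel_of_nonpos {w : ℝ} (hw : w ≤ 0) (m : ℝ) :
    tailKernel g w m = -(Iio w).indicator g m := by
  by_cases hm : m < w <;> simp [tailKernel, hw, hm, not_lt.2 hw]

theorem integral_tailKernel_snd (hg : Integrable g) (h0 : ∫ m, g m = 0) (w : ℝ) :
    ∫ m, tailKernel g w m = -∫ m in Iic w, g m := by
  rcases lt_or_ge 0 w with hw | hw
  · simp_rw [tailKernel_of_pos hw, integral_indicator measurableSet_Ici,
      integral_Ici_eq_integral_Ioi, setIntegral_Iic_eq_neg_setIntegral_Ioi hg h0, neg_neg]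
  · simp_rw [tailKernel_of_nonpos hw, integral_neg, integral_indicator measurableSet_Iio,
      integral_Iic_eq_integral_Iio]

theorem integrable_tailKernel (hg : AEStronglyMeasurable g) (hmg : Integrable fun m => m * g m) :
    Integrable (uncurry (tailKernel g)) (volume.prod volume) := by
  have hmeas : AEStronglyMeasurable (uncurry (tailKernel g)) (volume.prod volume) := by
    have hA : MeasurableSet {p : ℝ × ℝ | p.1 ∈ Ioc 0 p.2} :=
      (measurableSet_lt measurable_const measurable_fst).inter
        (measurableSet_le measurable_fst measurable_snd)
    have hB : MeasurableSet {p : ℝ × ℝ | p.1 ∈ Ioc p.2 0} :=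
      (measurableSet_lt measurable_snd measurable_fst).inter
        (measurableSet_le measurable_fst measurable_const)
    have : uncurry (tailKernel g) = {p : ℝ × ℝ | p.1 ∈ Ioc 0 p.2}.indicator (fun p => g p.2)
        - {p : ℝ × ℝ | p.1 ∈ Ioc p.2 0}.indicator (fun p => g p.2) := by
      ext ⟨w, m⟩; simp [tailKernel, indicator_apply]
    rw [this]
    exact (hg.comp_snd.indicator hA).sub (hg.comp_snd.indicator hB)
  refine (integrable_prod_iff' hmeas).2 ⟨.of_forall fun m => ?_, ?_⟩
  · exact (integrable_indicator_Ioc_const 0 m (g m)).sub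
      (integrable_indicator_Ioc_const m 0 (g m))
  · simpa only [uncurry_apply_pair, integral_norm_tailKernel_fst] using hmg.norm

theorem integral_setIntegral_Iic_eq_neg_integral_mul (hg : Integrable g)
    (hmg : Integrable fun m => m * g m) (h0 : ∫ m, g m = 0) :
    ∫ w, ∫ m in Iic w, g m = -∫ m, m * g m := by
  calc ∫ w, ∫ m in Iic w, g m = -∫ w, ∫ m, tailKernel g w m := by
        simp_rw [integral_tailKernel_snd hg h0, integral_neg, neg_neg]
    _ = -∫ m, ∫ w, tailKernel g w m := by
        rw [integral_integral_swap (integrable_tailKernel hg.aestronglyMeasurable hmg)]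
    _ = -∫ m, m * g m := by simp_rw [integral_tailKernel_fst]

end

theorem stmt13_general
    (f : ℝ → ℝ) (hf0 : ∀ x, 0 ≤ f x)
    (hmint : Integrable (fun m => m * f m))
    (hm2int : Integrable (fun m => m ^ 2 * f m))
    (hmean : (∫ m, m * f m) = 0)
    (hVarpos : 0 < ∫ m, m ^ 2 * f m)
    (v q : ℝ → ℝ)
    (hv : ∀ w, v w = ∫ m in Set.Iic w, m * f m)
    (hq : ∀ w, q w = -v w / ∫ m, m ^ 2 * f m) :
    (∀ w, v w ≤ 0) ∧
    Tendsto v atTop (𝓝 0) ∧ Tendsto v atBot (𝓝 0) ∧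
    (∫ w, q w) = 1 ∧ (∀ w, 0 ≤ q w) := by
  obtain rfl : v = fun w => ∫ m in Iic w, m * f m := funext hv
  have hv_nonpos : ∀ w, ∫ m in Iic w, m * f m ≤ 0 :=
    setIntegral_Iic_nonpos hmint hmean (fun m hm => mul_nonpos_of_nonpos_of_nonneg hm (hf0 m))
      fun m hm => mul_nonneg hm (hf0 m)
  have hv_integral : ∫ w, ∫ m in Iic w, m * f m = -∫ m, m ^ 2 * f m := by
    simp_rw [sq, mul_assoc]
    exact integral_setIntegral_Iic_eq_neg_integral_mul hmint
      (by simpa only [sq, mul_assoc] using hm2int) hmean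
  refine ⟨hv_nonpos, hmean ▸ tendsto_setIntegral_Iic_atTop hmint,
    tendsto_integral_Iic_zero tendsto_id, ?_, fun w => ?_⟩
  · simp_rw [hq, integral_div, integral_neg, hv_integral, neg_neg]
    exact div_self hVarpos.ne'
  · rw [hq]
    exact div_nonneg (neg_nonneg.2 (hv_nonpos w)) hVarpos.le

/-- for a mean-zero density f with positive finite variance,
v(w) = ∫_{-∞}^{w} m f(m) dm satisfies v ≤ 0, v → 0 at ±∞, and
q(w) = −v(w)/Var integrates to one, hence q is a probability density. -/
theorem stmt13
    (f : ℝ → ℝ) (hf0 : ∀ x, 0 ≤ f x)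
    (hfdens : (∫ x, f x) = 1)
    (hfint : Integrable f)
    (hmint : Integrable (fun m => m * f m))
    (hm2int : Integrable (fun m => m ^ 2 * f m))
    (hmean : (∫ m, m * f m) = 0)
    (hVarpos : 0 < ∫ m, m ^ 2 * f m)
    (v q : ℝ → ℝ)
    (hv : ∀ w, v w = ∫ m in Set.Iic w, m * f m)
    (hq : ∀ w, q w = -v w / ∫ m, m ^ 2 * f m) :
    (∀ w, v w ≤ 0) ∧
    Tendsto v atTop (𝓝 0) ∧ Tendsto v atBot (𝓝 0) ∧
    (∫ w, q w) = 1 ∧ (∀ w, 0 ≤ q w) :=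
  stmt13_general f hf0 hmint hm2int hmean hVarpos v q hv hq
end

section
/- Under strong parallel trends for a continuous treatment, the conditional contrast identifies the unconditional dose effect: if E[Y¹(w) − Y¹(0) | W = w] = E[Y¹(w) − Y¹(0)] for all w, and the counterfactual condition E[Y¹(0) | W = w] = E[Y⁰(0) | W = w] holds, then E[Y¹ − Y⁰ | W = w] = E[Y¹(w) − Y¹(0)], where Y¹ = Y¹(W) and Y⁰ = Y⁰(0). -/
open MeasureTheory

/-! Writing `Y¹ − Y⁰ = (Y¹ − Y¹(0)) + (Y¹(0) − Y⁰)` and taking conditional expectations given `W`,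
control validity cancels the second summand, and strong parallel trends turns the first into the
unconditional dose effect. -/

theorem condExp_sub_ae_eq_condExp_sub_add {α : Type*} {m m0 : MeasurableSpace α} {μ : Measure α}
    {X Y Z : α → ℝ} (hX : Integrable X μ) (hY : Integrable Y μ) (hZ : Integrable Z μ) :
    μ[X - Z | m] =ᵐ[μ] μ[X - Y | m] + (μ[Y | m] - μ[Z | m]) := by
  have hsplit : X - Z = (X - Y) + (Y - Z) := by abel
  rw [hsplit]
  exact (condExp_add (hX.sub hY) (hY.sub hZ) m).trans
    (Filter.EventuallyEq.rfl.add (condExp_sub hY hZ m))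

theorem stmt19_general
    {α : Type*} [MeasurableSpace α] (μ : Measure α)
    (Y1 : ℝ → α → ℝ) (Y00 W : α → ℝ)
    (hY1int : ∀ w, Integrable (Y1 w) μ) (hY00int : Integrable Y00 μ)
    (hY1obsint : Integrable (fun ω => Y1 (W ω) ω) μ)
    -- factorized conditional means given σ(W):
    (e1 e2 e3 eD : ℝ → ℝ)
    -- e1(w) = E[Y¹(w) − Y¹(0) | W = w]:
    (he1 : μ[fun ω => Y1 (W ω) ω - Y1 0 ω |
        MeasurableSpace.comap W (inferInstance : MeasurableSpace ℝ)]
      =ᵐ[μ] fun ω => e1 (W ω))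
    -- e2(w) = E[Y¹(0) | W = w]:
    (he2 : μ[fun ω => Y1 0 ω |
        MeasurableSpace.comap W (inferInstance : MeasurableSpace ℝ)]
      =ᵐ[μ] fun ω => e2 (W ω))
    -- e3(w) = E[Y⁰(0) | W = w]:
    (he3 : μ[Y00 | MeasurableSpace.comap W (inferInstance : MeasurableSpace ℝ)]
      =ᵐ[μ] fun ω => e3 (W ω))
    -- eD(w) = E[Y¹ − Y⁰ | W = w] with Y¹ = Y¹(W), Y⁰ = Y⁰(0):
    (heD : μ[fun ω => Y1 (W ω) ω - Y00 ω |
        MeasurableSpace.comap W (inferInstance : MeasurableSpace ℝ)]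
      =ᵐ[μ] fun ω => eD (W ω))
    -- (i) strong parallel trends: E[Y¹(w) − Y¹(0)|W=w] = E[Y¹(w) − Y¹(0)]:
    (hspt : ∀ w, e1 w = ∫ ω, (Y1 w ω - Y1 0 ω) ∂μ)
    -- (ii) control validity: E[Y¹(0)|W=w] = E[Y⁰(0)|W=w]:
    (hcv : ∀ w, e2 w = e3 w) :
    (fun ω => eD (W ω))
      =ᵐ[μ] fun ω => ∫ ω', (Y1 (W ω) ω' - Y1 0 ω') ∂μ := by
  have hdecomp : μ[fun ω => Y1 (W ω) ω - Y00 ω | MeasurableSpace.comap W inferInstance]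
      =ᵐ[μ] μ[fun ω => Y1 (W ω) ω - Y1 0 ω | MeasurableSpace.comap W inferInstance]
        + (μ[fun ω => Y1 0 ω | MeasurableSpace.comap W inferInstance]
          - μ[Y00 | MeasurableSpace.comap W inferInstance]) :=
    condExp_sub_ae_eq_condExp_sub_add hY1obsint (hY1int 0) hY00int
  filter_upwards [heD, he1, he2, he3, hdecomp] with ω hD h1 h2 h3 h
  simp only [Pi.add_apply, Pi.sub_apply] at h
  rw [← hspt (W ω)]
  linarith [hcv (W ω)]

/-- under strong parallel trends for a continuous treatment and
control validity, the conditional contrast identifies the unconditional dose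
effect: E[Y¹ − Y⁰ | W = w] = E[Y¹(w) − Y¹(0)], where Y¹ = Y¹(W), Y⁰ = Y⁰(0).
Conditional expectations given W = w are encoded through factorizations of
conditional expectations given σ(W). -/
theorem stmt19
    {α : Type*} [MeasurableSpace α] (μ : Measure α) [IsProbabilityMeasure μ]
    (Y1 : ℝ → α → ℝ) (Y00 W : α → ℝ) (hWmeas : Measurable W)
    (hY1int : ∀ w, Integrable (Y1 w) μ) (hY00int : Integrable Y00 μ)
    (hY1obsint : Integrable (fun ω => Y1 (W ω) ω) μ)
    -- factorized conditional means given σ(W):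
    (e1 e2 e3 eD : ℝ → ℝ)
    -- e1(w) = E[Y¹(w) − Y¹(0) | W = w]:
    (he1 : μ[fun ω => Y1 (W ω) ω - Y1 0 ω |
        MeasurableSpace.comap W (inferInstance : MeasurableSpace ℝ)]
      =ᵐ[μ] fun ω => e1 (W ω))
    -- e2(w) = E[Y¹(0) | W = w]:
    (he2 : μ[fun ω => Y1 0 ω |
        MeasurableSpace.comap W (inferInstance : MeasurableSpace ℝ)]
      =ᵐ[μ] fun ω => e2 (W ω))
    -- e3(w) = E[Y⁰(0) | W = w]:
    (he3 : μ[Y00 | MeasurableSpace.comap W (inferInstance : MeasurableSpace ℝ)]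
      =ᵐ[μ] fun ω => e3 (W ω))
    -- eD(w) = E[Y¹ − Y⁰ | W = w] with Y¹ = Y¹(W), Y⁰ = Y⁰(0):
    (heD : μ[fun ω => Y1 (W ω) ω - Y00 ω |
        MeasurableSpace.comap W (inferInstance : MeasurableSpace ℝ)]
      =ᵐ[μ] fun ω => eD (W ω))
    -- (i) strong parallel trends: E[Y¹(w) − Y¹(0)|W=w] = E[Y¹(w) − Y¹(0)]:
    (hspt : ∀ w, e1 w = ∫ ω, (Y1 w ω - Y1 0 ω) ∂μ)
    -- (ii) control validity: E[Y¹(0)|W=w] = E[Y⁰(0)|W=w]: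
    (hcv : ∀ w, e2 w = e3 w) :
    (fun ω => eD (W ω))
      =ᵐ[μ] fun ω => ∫ ω', (Y1 (W ω) ω' - Y1 0 ω') ∂μ :=
  stmt19_general μ Y1 Y00 W hY1int hY00int hY1obsint e1 e2 e3 eD he1 he2 he3 heD hspt hcv
end
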